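/- Let Φ : ℝ[ħ][x,y] → W be the ℝ[ħ]-linear map determined by Φ(x^c y^d) = X^c Y^d for all c, d ∈ ℕ. Then Φ is a linear isomorphism, and Φ(f ⋆ g) = Φ(f)·Φ(g) for all f, g ∈ ℝ[ħ][x,y]; that is, the Weyl algebra is isomorphic to the deformation quantization (ℝ[ħ][x,y], ⋆) of polynomial functions on ℝ² with its canonical Poisson structure. -/

import Mathlib

open MvPolynomial

noncomputable section

/-- The defining relation of the Weyl algebra: `YX = XY + ħ` in the free
`ℝ[ħ]`-algebra on two generators. -/
inductive WeylRel : FreeAlgebra (Polynomial ℝ) (Fin 2) →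
    FreeAlgebra (Polynomial ℝ) (Fin 2) → Prop
  | comm : WeylRel (FreeAlgebra.ι (Polynomial ℝ) 1 * FreeAlgebra.ι (Polynomial ℝ) 0)
      (FreeAlgebra.ι (Polynomial ℝ) 0 * FreeAlgebra.ι (Polynomial ℝ) 1
        + algebraMap (Polynomial ℝ) (FreeAlgebra (Polynomial ℝ) (Fin 2)) Polynomial.X)

/-- The Weyl algebra: the quotient of the free `ℝ[ħ]`-algebra on `X, Y` by the
two-sided ideal generated by `YX − XY − ħ`. -/
abbrev Weyl : Type := RingQuot WeylRel

/-- The generator `X` of the Weyl algebra. -/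
def Xw : Weyl := RingQuot.mkAlgHom (Polynomial ℝ) WeylRel (FreeAlgebra.ι (Polynomial ℝ) 0)

/-- The generator `Y` of the Weyl algebra. -/
def Yw : Weyl := RingQuot.mkAlgHom (Polynomial ℝ) WeylRel (FreeAlgebra.ι (Polynomial ℝ) 1)

/-- `ℝ[ħ][x,y]`: the polynomial ring in two variables `x = X 0`, `y = X 1` over
`ℝ[ħ] = Polynomial ℝ`. -/
abbrev Rh2 : Type := MvPolynomial (Fin 2) (Polynomial ℝ)

/-- The normal-ordered Moyal star product
`f ⋆ g = Σ_{k ≥ 0} (ħ^k/k!) (∂_y^k f)(∂_x^k g)` on `ℝ[ħ][x,y]`. -/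
def star2 (f g : Rh2) : Rh2 :=
  ∑ᶠ k : ℕ, ((k.factorial : ℝ)⁻¹) •
    ((C Polynomial.X : Rh2) ^ k *
      ((fun h => pderiv (1 : Fin 2) h)^[k] f) * ((fun h => pderiv (0 : Fin 2) h)^[k] g))

-- my lemmas

lemma Yw_mul_Xw : Yw * Xw = Xw * Yw + algebraMap (Polynomial ℝ) Weyl Polynomial.X := by
  rw [Xw, Yw, ← map_mul, RingQuot.mkAlgHom_rel (Polynomial ℝ) WeylRel.comm]
  simp [map_add, map_mul, AlgHom.commutes]

lemma Yw_mul_Xw_pow (c : ℕ) :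
    Yw * Xw ^ c = Xw ^ c * Yw + c • ((Polynomial.X : Polynomial ℝ) • Xw ^ (c - 1)) := by
  induction c with
  | zero => simp
  | succ n ih =>
    have h1 : (algebraMap (Polynomial ℝ) Weyl) Polynomial.X * Xw ^ n = Polynomial.X • Xw ^ n :=
      (Algebra.smul_def _ _).symm
    rw [pow_succ', ← mul_assoc, Yw_mul_Xw, add_mul, mul_assoc, ih, h1, mul_add, succ_nsmul]
    cases n with
    | zero => simp
    | succ m =>
      have h2 : Xw * Xw ^ (m + 1 - 1) = Xw ^ (m + 1) := by
        rw [Nat.add_sub_cancel, ← pow_succ']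
      rw [mul_smul_comm, mul_smul_comm, h2, Nat.add_sub_cancel, add_assoc, ← mul_assoc, ← pow_succ']

lemma monomial_eq_pow (m : Fin 2 →₀ ℕ) (a : Polynomial ℝ) :
    (monomial m a : Rh2) = a • ((X 0 : Rh2) ^ (m 0) * X 1 ^ (m 1)) := by
  rw [monomial_eq, smul_eq_C_mul]
  congr 1
  rw [Finsupp.prod_fintype _ _ (fun i => pow_zero _)]
  exact Fin.prod_univ_two _

/-- multiplication by x -/
def mX : Module.End (Polynomial ℝ) Rh2 := LinearMap.mulLeft (Polynomial ℝ) (X 0)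

/-- multiplication by y -/
def mY : Module.End (Polynomial ℝ) Rh2 := LinearMap.mulLeft (Polynomial ℝ) (X 1)

/-- d/dx -/
def Dx : Module.End (Polynomial ℝ) Rh2 :=
  ((pderiv 0 : Derivation (Polynomial ℝ) Rh2 Rh2) : Rh2 →ₗ[Polynomial ℝ] Rh2)

def Dy : Module.End (Polynomial ℝ) Rh2 :=
  ((pderiv 1 : Derivation (Polynomial ℝ) Rh2 Rh2) : Rh2 →ₗ[Polynomial ℝ] Rh2)

def rhoY : Module.End (Polynomial ℝ) Rh2 := mY + (Polynomial.X : Polynomial ℝ) • Dx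

lemma relEnd : rhoY * mX = mX * rhoY + algebraMap (Polynomial ℝ) _ Polynomial.X := by
  refine LinearMap.ext fun f => ?_
  simp only [rhoY, mX, mY, Dx, Module.End.mul_apply, LinearMap.add_apply, LinearMap.smul_apply,
    LinearMap.mulLeft_apply, Derivation.coeFn_coe, Module.algebraMap_end_apply]
  rw [pderiv_mul, pderiv_X_self]
  rw [smul_eq_C_mul, smul_eq_C_mul, smul_eq_C_mul]
  ring

def Fr : FreeAlgebra (Polynomial ℝ) (Fin 2) →ₐ[Polynomial ℝ] Module.End (Polynomial ℝ) Rh2 :=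
  FreeAlgebra.lift _ (fun i => if i = 0 then mX else rhoY)

lemma Fr_rel : ∀ x y, WeylRel x y → Fr x = Fr y := by
  rintro _ _ ⟨⟩
  simp only [map_mul, map_add, Fr, FreeAlgebra.lift_ι_apply, AlgHom.commutes]
  norm_num
  exact relEnd

def rho : Weyl →ₐ[Polynomial ℝ] Module.End (Polynomial ℝ) Rh2 :=
  RingQuot.liftAlgHom (Polynomial ℝ) ⟨Fr, Fr_rel⟩

lemma rho_Xw : rho Xw = mX := by
  rw [Xw, rho, RingQuot.liftAlgHom_mkAlgHom_apply]
  simp [Fr]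

lemma rho_Yw : rho Yw = rhoY := by
  rw [Yw, rho, RingQuot.liftAlgHom_mkAlgHom_apply]
  simp [Fr]

section Phi

variable {Φ : Rh2 →ₗ[Polynomial ℝ] Weyl}
  (H : ∀ c d : ℕ, Φ (X 0 ^ c * X 1 ^ d) = Xw ^ c * Yw ^ d)

include H

lemma phi_monomial (m : Fin 2 →₀ ℕ) (a : Polynomial ℝ) :
    Φ (monomial m a) = a • (Xw ^ (m 0) * Yw ^ (m 1)) := by
  rw [monomial_eq_pow, map_smul, H]

lemma phi_one : Φ 1 = 1 := by
  have := H 0 0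
  simpa using this

lemma phi_x_mul (g : Rh2) : Φ (X 0 * g) = Xw * Φ g := by
  have : Φ ∘ₗ mX = (LinearMap.mulLeft (Polynomial ℝ) Xw) ∘ₗ Φ := by
    refine Module.Basis.ext (basisMonomials (Fin 2) (Polynomial ℝ)) fun m => ?_
    rw [coe_basisMonomials]
    simp only [LinearMap.comp_apply, mX, LinearMap.mulLeft_apply]
    rw [monomial_eq_pow, one_smul]
    have hx : (X 0 : Rh2) * (X 0 ^ (m 0) * X 1 ^ (m 1)) = X 0 ^ (m 0 + 1) * X 1 ^ (m 1) := by
      ring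
    rw [hx, H, H, pow_succ', mul_assoc]
  exact DFunLike.congr_fun this g

lemma phi_y_mul (g : Rh2) :
    Φ (X 1 * g + (Polynomial.X : Polynomial ℝ) • (pderiv (0 : Fin 2)) g) = Yw * Φ g := by
  have : Φ ∘ₗ rhoY = (LinearMap.mulLeft (Polynomial ℝ) Yw) ∘ₗ Φ := by
    refine Module.Basis.ext (basisMonomials (Fin 2) (Polynomial ℝ)) fun m => ?_
    rw [coe_basisMonomials]
    simp only [LinearMap.comp_apply, rhoY, mY, Dx, LinearMap.add_apply, LinearMap.smul_apply,
      LinearMap.mulLeft_apply, Derivation.coeFn_coe]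
    rw [monomial_eq_pow, one_smul]
    have hd : (pderiv (1 : Fin 2)) ((X 0 : Rh2) ^ (m 1)) = 0 := by
      rw [pderiv_pow, pderiv_X_of_ne (by decide)]
      ring
    have hdx : (pderiv (0 : Fin 2)) ((X 0 : Rh2) ^ (m 0) * X 1 ^ (m 1)) =
        (m 0 : Rh2) * (X 0 ^ (m 0 - 1) * X 1 ^ (m 1)) := by
      rw [pderiv_mul, pderiv_pow, pderiv_X_self, pderiv_pow, pderiv_X_of_ne (by decide)]
      ring
    have hy : (X 1 : Rh2) * (X 0 ^ (m 0) * X 1 ^ (m 1)) = X 0 ^ (m 0) * X 1 ^ (m 1 + 1) := by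
      ring
    rw [hdx, hy, map_add, H]
    have hnat : (m 0 : Rh2) * (X 0 ^ (m 0 - 1) * X 1 ^ (m 1)) =
        (m 0) • ((X 0 : Rh2) ^ (m 0 - 1) * X 1 ^ (m 1)) := by
      rw [nsmul_eq_mul]
    rw [hnat, map_smul, map_nsmul, H]
    rw [H, ← mul_assoc, Yw_mul_Xw_pow, add_mul, smul_mul_assoc, smul_mul_assoc,
      mul_assoc, ← pow_succ', smul_comm]
  have h2 := DFunLike.congr_fun this g
  simpa [rhoY, mY, Dx, LinearMap.mulLeft_apply] using h2

lemma keyB (a : FreeAlgebra (Polynomial ℝ) (Fin 2)) (g : Rh2) :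
    Φ (rho (RingQuot.mkAlgHom (Polynomial ℝ) WeylRel a) g) =
      RingQuot.mkAlgHom (Polynomial ℝ) WeylRel a * Φ g := by
  induction a using FreeAlgebra.induction generalizing g with
  | grade0 r =>
    rw [AlgHom.commutes, AlgHom.commutes, Module.algebraMap_end_apply, map_smul,
      Algebra.smul_def]
  | grade1 i =>
    fin_cases i
    · show Φ (rho Xw g) = Xw * Φ g
      rw [rho_Xw]
      exact phi_x_mul H g
    · show Φ (rho Yw g) = Yw * Φ g
      rw [rho_Yw]
      simpa [rhoY, mY, Dx, LinearMap.mulLeft_apply] using phi_y_mul H g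
  | mul x y hx hy =>
    rw [map_mul, map_mul, Module.End.mul_apply, hx, hy, mul_assoc]
  | add x y hx hy =>
    rw [map_add, map_add, LinearMap.add_apply, map_add, hx, hy, add_mul]

end Phi

lemma commute_mY_smulDx : Commute mY ((Polynomial.X : Polynomial ℝ) • Dx) := by
  apply Commute.smul_right
  refine LinearMap.ext fun f => ?_
  simp only [Commute, SemiconjBy, Module.End.mul_apply, mY, Dx, LinearMap.mulLeft_apply,
    Derivation.coeFn_coe]
  rw [pderiv_mul, pderiv_X_of_ne (by decide : (1 : Fin 2) ≠ 0)]
  ring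

lemma rhoY_pow_apply (d : ℕ) (g : Rh2) :
    (rhoY ^ d) g = ∑ k ∈ Finset.range (d + 1),
      d.choose k • ((Polynomial.X : Polynomial ℝ) ^ k • ((X 1 : Rh2) ^ (d - k) * (Dx ^ k) g)) := by
  rw [rhoY, commute_mY_smulDx.add_pow, ← Finset.sum_range_reflect, LinearMap.sum_apply]
  refine Finset.sum_congr rfl fun j hj => ?_
  rw [Finset.mem_range] at hj
  have hj' : j ≤ d := Nat.lt_succ_iff.mp hj
  have e1 : d + 1 - 1 - j = d - j := by omega
  have e2 : d - (d - j) = j := Nat.sub_sub_self hj'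
  rw [e1, Nat.choose_symm hj', e2]
  simp only [Module.End.mul_apply, Module.End.natCast_apply, smul_pow, mY,
    LinearMap.pow_mulLeft, LinearMap.mulLeft_apply, LinearMap.smul_apply, map_nsmul,
    map_smul, mul_smul_comm]

lemma iterX_eq (k : ℕ) (g : Rh2) : (fun h => pderiv (0 : Fin 2) h)^[k] g = (Dx ^ k) g := by
  rw [Module.End.pow_apply]; rfl

lemma iterY_eq (k : ℕ) (g : Rh2) : (fun h => pderiv (1 : Fin 2) h)^[k] g = (Dy ^ k) g := by
  rw [Module.End.pow_apply]; rfl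

lemma iter_pderiv_y (k c d : ℕ) :
    (fun h => pderiv (1 : Fin 2) h)^[k] ((X 0 : Rh2) ^ c * X 1 ^ d) =
      d.descFactorial k • ((X 0 : Rh2) ^ c * X 1 ^ (d - k)) := by
  induction k with
  | zero => simp
  | succ n ih =>
    rw [Function.iterate_succ_apply', ih]
    have hstep : (pderiv (1 : Fin 2)) ((X 0 : Rh2) ^ c * X 1 ^ (d - n)) =
        (d - n) • ((X 0 : Rh2) ^ c * X 1 ^ (d - (n + 1))) := by
      rw [pderiv_mul, pderiv_pow, pderiv_X_of_ne (by decide : (0 : Fin 2) ≠ 1),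
        pderiv_pow, pderiv_X_self, nsmul_eq_mul, ← Nat.sub_sub]
      ring
    show (pderiv (1 : Fin 2)) (d.descFactorial n • ((X 0 : Rh2) ^ c * X 1 ^ (d - n))) = _
    rw [map_nsmul, hstep, smul_smul, Nat.descFactorial_succ, Nat.mul_comm]

lemma star2_pow (c d : ℕ) (g : Rh2) :
    star2 ((X 0 : Rh2) ^ c * X 1 ^ d) g = ∑ k ∈ Finset.range (d + 1),
      d.choose k • ((Polynomial.X : Polynomial ℝ) ^ k •
        ((X 0 : Rh2) ^ c * ((X 1 : Rh2) ^ (d - k) * (Dx ^ k) g))) := by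
  rw [star2, finsum_eq_sum_of_support_subset _ (s := Finset.range (d + 1)) ?hsupp]
  case hsupp =>
    intro k hk
    simp only [Function.mem_support, Ne] at hk
    by_contra hmem
    apply hk
    have hkd : d < k := by
      simp only [Finset.coe_range, Set.mem_Iio] at hmem; omega
    rw [iter_pderiv_y, Nat.descFactorial_eq_zero_iff_lt.mpr hkd, zero_smul, mul_zero,
      zero_mul, smul_zero]
  refine Finset.sum_congr rfl fun k hk => ?_
  rw [Finset.mem_range, Nat.lt_succ_iff] at hk
  rw [iter_pderiv_y, iterX_eq, mul_smul_comm, smul_mul_assoc,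
    ← Nat.cast_smul_eq_nsmul ℝ (d.descFactorial k), smul_smul]
  have hcoef : (k.factorial : ℝ)⁻¹ * (d.descFactorial k : ℝ) = (d.choose k : ℝ) := by
    rw [Nat.descFactorial_eq_factorial_mul_choose]
    push_cast
    rw [← mul_assoc, inv_mul_cancel₀ (by exact_mod_cast k.factorial_ne_zero), one_mul]
  rw [hcoef, Nat.cast_smul_eq_nsmul]
  congr 1
  rw [smul_eq_C_mul, ← map_pow]
  ring

lemma Dy_pow_eq_zero {k : ℕ} {f : Rh2} (h : ∀ m ∈ f.support, m 1 < k) : (Dy ^ k) f = 0 := by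
  conv_lhs => rw [f.as_sum]
  rw [map_sum]
  refine Finset.sum_eq_zero fun m hm => ?_
  rw [monomial_eq_pow, map_smul, ← iterY_eq, iter_pderiv_y,
    Nat.descFactorial_eq_zero_iff_lt.mpr (h m hm), zero_smul, smul_zero]

lemma star2_support (f g : Rh2) :
    (Function.support fun k => ((k.factorial : ℝ)⁻¹) •
      ((C Polynomial.X : Rh2) ^ k * ((fun h => pderiv (1 : Fin 2) h)^[k] f) *
        ((fun h => pderiv (0 : Fin 2) h)^[k] g))).Finite := by
  apply Set.Finite.subset (Set.finite_Iio (f.support.sup (fun m => m 1) + 1))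
  intro k hk
  simp only [Function.mem_support] at hk
  by_contra h
  apply hk
  have hm : ∀ m ∈ f.support, m 1 < k := by
    intro m hm
    have hle : m 1 ≤ f.support.sup (fun m => m 1) := Finset.le_sup (f := fun m => m 1) hm
    simp only [Set.mem_Iio, not_lt] at h
    omega
  rw [iterY_eq, Dy_pow_eq_zero hm, mul_zero, zero_mul, smul_zero]

lemma star2_add_left (p q g : Rh2) : star2 (p + q) g = star2 p g + star2 q g := by
  rw [star2, star2, star2, ← finsum_add_distrib (star2_support p g) (star2_support q g)]
  apply finsum_congr; intro k
  rw [iterY_eq, iterY_eq, iterY_eq, map_add, mul_add, add_mul, smul_add]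

lemma star2_smul_left (a : Polynomial ℝ) (p g : Rh2) : star2 (a • p) g = a • star2 p g := by
  rw [star2, star2, smul_finsum' a (star2_support p g)]
  apply finsum_congr; intro k
  rw [iterY_eq, iterY_eq, map_smul, mul_smul_comm, smul_mul_assoc, smul_comm]

lemma keyA {Φ : Rh2 →ₗ[Polynomial ℝ] Weyl}
    (H : ∀ c d : ℕ, Φ (X 0 ^ c * X 1 ^ d) = Xw ^ c * Yw ^ d) (f g : Rh2) :
    star2 f g = rho (Φ f) g := by
  induction f using MvPolynomial.induction_on' with
  | monomial m a =>
    have hrho : rho (Xw ^ (m 0) * Yw ^ (m 1)) g = ∑ k ∈ Finset.range (m 1 + 1),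
        (m 1).choose k • ((Polynomial.X : Polynomial ℝ) ^ k •
          ((X 0 : Rh2) ^ (m 0) * ((X 1 : Rh2) ^ (m 1 - k) * (Dx ^ k) g))) := by
      rw [map_mul, map_pow, map_pow, rho_Xw, rho_Yw, Module.End.mul_apply, rhoY_pow_apply,
        mX, LinearMap.pow_mulLeft, LinearMap.mulLeft_apply, Finset.mul_sum]
      refine Finset.sum_congr rfl fun k _ => ?_
      rw [mul_smul_comm, mul_smul_comm]
    rw [phi_monomial H, map_smul, LinearMap.smul_apply, hrho, monomial_eq_pow,
      star2_smul_left, star2_pow]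
  | add p q hp hq =>
    rw [star2_add_left, hp, hq, map_add, map_add, LinearMap.add_apply]

lemma star2_one (f : Rh2) : star2 f 1 = f := by
  rw [star2, finsum_eq_single _ 0 ?_]
  · simp
  · intro k hk
    obtain ⟨j, rfl⟩ := Nat.exists_eq_succ_of_ne_zero hk
    have hz : (fun h => pderiv (0 : Fin 2) h)^[j + 1] (1 : Rh2) = 0 := by
      rw [Function.iterate_succ_apply]
      show (fun h => pderiv (0 : Fin 2) h)^[j] ((pderiv (0 : Fin 2)) (1 : Rh2)) = 0
      rw [pderiv_one, iterX_eq, map_zero]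
    rw [hz, mul_zero, smul_zero]

theorem weyl_iso_deformation_quantization' :
    (∃ Φ : Rh2 →ₗ[Polynomial ℝ] Weyl,
        ∀ c d : ℕ, Φ (X 0 ^ c * X 1 ^ d) = Xw ^ c * Yw ^ d)
    ∧ ∀ Φ : Rh2 →ₗ[Polynomial ℝ] Weyl,
        (∀ c d : ℕ, Φ (X 0 ^ c * X 1 ^ d) = Xw ^ c * Yw ^ d) →
        Function.Bijective Φ ∧ ∀ f g : Rh2, Φ (star2 f g) = Φ f * Φ g := by
  constructor
  · refine ⟨(basisMonomials (Fin 2) (Polynomial ℝ)).constr ℕ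
      (fun m => Xw ^ (m 0) * Yw ^ (m 1)), fun c d => ?_⟩
    have hm : ((X 0 : Rh2) ^ c * X 1 ^ d) =
        (basisMonomials (Fin 2) (Polynomial ℝ)) (Finsupp.single 0 c + Finsupp.single 1 d) := by
      have hb : (basisMonomials (Fin 2) (Polynomial ℝ))
            (Finsupp.single 0 c + Finsupp.single 1 d) =
          monomial (Finsupp.single 0 c + Finsupp.single 1 d) (1 : Polynomial ℝ) := by
        rw [coe_basisMonomials]
      rw [hb, monomial_eq_pow, one_smul]
      simp [Finsupp.single_apply]
    rw [hm, Module.Basis.constr_basis]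
    simp [Finsupp.single_apply]
  · intro Φ H
    refine ⟨⟨fun p q hpq => ?_, fun w => ?_⟩, fun f g => ?_⟩
    · have hp := keyA H p (1 : Rh2)
      have hq := keyA H q (1 : Rh2)
      rw [star2_one] at hp hq
      rw [hp, hq, hpq]
    · obtain ⟨aw, rfl⟩ := RingQuot.mkAlgHom_surjective (Polynomial ℝ) WeylRel w
      exact ⟨rho (RingQuot.mkAlgHom (Polynomial ℝ) WeylRel aw) 1,
        by rw [keyB H, phi_one H, mul_one]⟩
    · obtain ⟨af, haf⟩ := RingQuot.mkAlgHom_surjective (Polynomial ℝ) WeylRel (Φ f)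
      rw [keyA H f g, ← haf, keyB H, haf]

/-- the `ℝ[ħ]`-linear map `Φ : ℝ[ħ][x,y] → W` with
`Φ(x^c y^d) = X^c Y^d` exists, and any such map is a linear isomorphism intertwining
the Moyal star product with the Weyl algebra product. -/
theorem weyl_iso_deformation_quantization :
    (∃ Φ : Rh2 →ₗ[Polynomial ℝ] Weyl,
        ∀ c d : ℕ, Φ (X 0 ^ c * X 1 ^ d) = Xw ^ c * Yw ^ d)
    ∧ ∀ Φ : Rh2 →ₗ[Polynomial ℝ] Weyl,
        (∀ c d : ℕ, Φ (X 0 ^ c * X 1 ^ d) = Xw ^ c * Yw ^ d) →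
        Function.Bijective Φ ∧ ∀ f g : Rh2, Φ (star2 f g) = Φ f * Φ g :=
  weyl_iso_deformation_quantization'
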